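/- Let g ≥ 1, let q₁,…,q_g ∈ ℂ be pairwise distinct, and let u₁,…,u_{2g−1} ∈ ℂ satisfy q_j ≠ u_l for all j and l. Then Σ_{j=1}^g [∏_{l=1}^{2g−1}(q_j − u_l) / ∏_{α≠j}(q_j − q_α)²] · [Σ_{l=1}^{2g−1} 1/(q_j − u_l) − 2·Σ_{m≠j} 1/(q_j − q_m)] = 1. (This is the residue identity, for the rational differential ∏_{s≠n,k}(u − u_s)du/∏_{m=1}^g (u − q_m)², which completes the proof of the Schlesinger equations for the diagonal entries.) -/

import Mathlib

/-!
The `j`-th summand is the residue at `q j` of `P(z) dz / ∏ₘ (z - q m)²` with `P = ∏ₗ (z - u l)`,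
and the identity says that these residues add up to the leading coefficient of `P`.
Since `deg P = 2g - 1 < 2g`, Hermite interpolation at the double nodes `q j` writes
`P = ∑ⱼ (Aⱼ + Bⱼ (X - q j)) Nⱼ²` with `Nⱼ = ∏_{m ≠ j} (X - q m)`, where `Bⱼ` is exactly that residue;
comparing coefficients of `X ^ (2g - 1)` gives `∑ⱼ Bⱼ = 1`.
-/

open Finset Polynomial Lagrange

section

variable {R : Type*} [CommRing R]

theorem sq_X_sub_C_dvd_of_eval_eq_zero {f : R[X]} {a : R} (h₀ : f.eval a = 0)
    (h₁ : (derivative f).eval a = 0) : (X - C a) ^ 2 ∣ f := by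
  obtain ⟨p, rfl⟩ := dvd_iff_isRoot.2 h₀
  obtain ⟨r, rfl⟩ := dvd_iff_isRoot.2 (by simpa [derivative_mul] using h₁ : p.IsRoot a)
  exact ⟨r, by ring⟩

theorem natDegree_linear_mul_le (M : R[X]) (a b c : R) :
    ((C a + C b * (X - C c)) * M).natDegree ≤ M.natDegree + 1 := by
  rw [add_comm M.natDegree]
  exact natDegree_mul_le_of_le (by compute_degree) le_rfl

theorem coeff_linear_mul_monic {M : R[X]} (hM : M.Monic) (a b c : R) :
    ((C a + C b * (X - C c)) * M).coeff (M.natDegree + 1) = b := by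
  have hM' : M.coeff (M.natDegree + 1) = 0 := coeff_eq_zero_of_natDegree_lt (lt_add_one _)
  simp only [add_mul, mul_assoc, sub_mul, coeff_add, coeff_sub, coeff_C_mul, coeff_X_mul,
    hM.coeff_natDegree, hM']
  ring

end

variable {F : Type*} [Field F] {ι : Type*} [DecidableEq ι]

theorem eval_derivative_nodal {s : Finset ι} {v : ι → F} {x : F} (hx : ∀ i ∈ s, x ≠ v i) :
    (derivative (nodal s v)).eval x = (nodal s v).eval x * ∑ i ∈ s, 1 / (x - v i) := by
  rw [derivative_nodal, eval_finsetSum, mul_sum]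
  refine sum_congr rfl fun i hi => ?_
  rw [nodal_eq_mul_nodal_erase hi, eval_mul, eval_sub, eval_X, eval_C,
    mul_comm (x - v i), mul_assoc, mul_one_div_cancel (sub_ne_zero.2 (hx i hi)), mul_one]

variable [Fintype ι] (P : F[X]) (q : ι → F) (j : ι)

/-- The residue at `q j` of the rational function `P / (nodal univ q) ^ 2`. -/
noncomputable def sqNodalResidue : F :=
  let N := nodal (univ.erase j) q
  ((derivative P).eval (q j) * N.eval (q j) - 2 * P.eval (q j) * (derivative N).eval (q j)) /
    N.eval (q j) ^ 3

/-- The summand of Hermite interpolation of `P` at the double nodes `q`: it agrees with `P` to first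
order at `q j` and vanishes to second order at every other node. -/
noncomputable def hermiteTerm : F[X] :=
  (C (P.eval (q j) / (nodal (univ.erase j) q).eval (q j) ^ 2) +
    C (sqNodalResidue P q j) * (X - C (q j))) * nodal (univ.erase j) q ^ 2

variable {q}

theorem sq_X_sub_C_dvd_sub_hermiteTerm (hq : Function.Injective q) :
    (X - C (q j)) ^ 2 ∣ P - hermiteTerm P q j := by
  have hN : (nodal (univ.erase j) q).eval (q j) ≠ 0 :=
    eval_nodal_not_at_node fun i hi => hq.ne (ne_of_mem_erase hi).symm
  apply sq_X_sub_C_dvd_of_eval_eq_zero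
  · simp [hermiteTerm, hN]
  · simp only [hermiteTerm, sqNodalResidue, derivative_sub, derivative_mul, derivative_add,
      derivative_C, derivative_X, derivative_sq, zero_mul, sub_zero, mul_one, zero_add, eval_sub,
      eval_add, eval_mul, eval_C, eval_pow, eval_X, sub_self, mul_zero, add_zero]
    field_simp
    ring

theorem sq_X_sub_C_dvd_hermiteTerm {i : ι} (hij : i ≠ j) :
    (X - C (q i)) ^ 2 ∣ hermiteTerm P q j :=
  dvd_mul_of_dvd_right
    (pow_dvd_pow_of_dvd (X_sub_C_dvd_nodal q (mem_erase.2 ⟨hij, mem_univ i⟩)) 2) _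

theorem natDegree_sq_nodal_erase_add_one :
    (nodal (univ.erase j) q ^ 2).natDegree + 1 = 2 * Fintype.card ι - 1 := by
  have := Fintype.card_pos_iff.2 ⟨j⟩
  rw [natDegree_pow, natDegree_nodal, card_erase_of_mem (mem_univ j), card_univ]
  omega

theorem natDegree_hermiteTerm_le : (hermiteTerm P q j).natDegree ≤ 2 * Fintype.card ι - 1 :=
  natDegree_sq_nodal_erase_add_one (q := q) j ▸ natDegree_linear_mul_le _ _ _ _

theorem coeff_hermiteTerm :
    (hermiteTerm P q j).coeff (2 * Fintype.card ι - 1) = sqNodalResidue P q j :=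
  natDegree_sq_nodal_erase_add_one (q := q) j ▸ coeff_linear_mul_monic (nodal_monic.pow 2) _ _ _

variable {P}

theorem eq_sum_hermiteTerm (hq : Function.Injective q) (hP : P.natDegree < 2 * Fintype.card ι) :
    P = ∑ j, hermiteTerm P q j := by
  have hdvd : nodal univ q ^ 2 ∣ P - ∑ j, hermiteTerm P q j := by
    rw [nodal, ← prod_pow]
    refine Fintype.prod_dvd_of_coprime
      ((pairwise_coprime_X_sub_C hq).mono fun _ _ h => h.pow) fun j => ?_
    rw [← add_sum_erase _ _ (mem_univ j), ← sub_sub]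
    exact dvd_sub (sq_X_sub_C_dvd_sub_hermiteTerm P j hq)
      (dvd_sum fun i hi => sq_X_sub_C_dvd_hermiteTerm P i (ne_of_mem_erase hi).symm)
  have hdeg : (P - ∑ j, hermiteTerm P q j).natDegree < (nodal univ q ^ 2).natDegree := by
    rw [natDegree_pow, natDegree_nodal, card_univ]
    refine lt_of_le_of_lt (natDegree_sub_le_of_le (le_refl _)
      (natDegree_sum_le_of_forall_le _ _ fun j _ => natDegree_hermiteTerm_le P j)) ?_
    omega
  exact sub_eq_zero.1 (eq_zero_of_dvd_of_natDegree_lt hdvd hdeg)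

theorem sum_sqNodalResidue (hq : Function.Injective q) (hP : P.natDegree < 2 * Fintype.card ι) :
    ∑ j, sqNodalResidue P q j = P.coeff (2 * Fintype.card ι - 1) := by
  calc ∑ j, sqNodalResidue P q j = (∑ j, hermiteTerm P q j).coeff (2 * Fintype.card ι - 1) := by
        simp only [finsetSum_coeff, coeff_hermiteTerm]
    _ = P.coeff (2 * Fintype.card ι - 1) := by rw [← eq_sum_hermiteTerm hq hP]

theorem sqNodalResidue_nodal {κ : Type*} [DecidableEq κ] (s : Finset κ) (u : κ → F)
    (hq : Function.Injective q) (hu : ∀ l ∈ s, q j ≠ u l) :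
    sqNodalResidue (nodal s u) q j =
      (∏ l ∈ s, (q j - u l)) / (∏ m ∈ univ.erase j, (q j - q m)) ^ 2 *
        ((∑ l ∈ s, 1 / (q j - u l)) - 2 * ∑ m ∈ univ.erase j, 1 / (q j - q m)) := by
  have hqj : ∀ m ∈ univ.erase j, q j ≠ q m := fun m hm => hq.ne (ne_of_mem_erase hm).symm
  have hN := eval_nodal_not_at_node hqj
  rw [eval_nodal] at hN
  simp only [sqNodalResidue, eval_derivative_nodal hu, eval_derivative_nodal hqj, eval_nodal]
  field_simp

theorem residue_identity (g : ℕ) (hg : 1 ≤ g) (q : Fin g → ℂ)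
    (hq : ∀ i j : Fin g, i ≠ j → q i ≠ q j)
    (u : Fin (2 * g - 1) → ℂ) (hqu : ∀ j l, q j ≠ u l) :
    ∑ j, ((∏ l, (q j - u l)) / (∏ α ∈ univ.erase j, (q j - q α)) ^ 2) *
      ((∑ l, 1 / (q j - u l)) - 2 * ∑ m ∈ univ.erase j, 1 / (q j - q m)) = 1 := by
  have hq_inj : Function.Injective q := fun i j hij => by_contra fun hne => hq i j hne hij
  have hdeg : (nodal univ u).natDegree = 2 * g - 1 := by
    rw [natDegree_nodal, card_univ, Fintype.card_fin]
  have hsum := sum_sqNodalResidue hq_inj (P := nodal univ u) (by rw [hdeg, Fintype.card_fin]; omega)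
  have hlead := (nodal_monic (s := univ) (v := u)).coeff_natDegree
  rw [hdeg] at hlead
  rw [Fintype.card_fin, hlead] at hsum
  exact (sum_congr rfl fun j _ => (sqNodalResidue_nodal j univ u hq_inj fun l _ => hqu j l).symm).trans
    hsum
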